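/- arXiv:0806.0757 — 4 statements merged into one kernel-verified Lean document; each statement's English description precedes it below -/
import Mathlib

section
/- For two stiffened gases with common pressure p and temperature T, the mixture pressure law holds: if ρ = ((1+α)/2)ρ⁺ + ((1-α)/2)ρ⁻ and ρe = ((1+α)/2)ρ⁺e⁺ + ((1-α)/2)ρ⁻e⁻, where (ρ±, e±) satisfy the stiffened gas EOS at (p,T), then p = (γ(α)-1)ρe - π(α), with γ(α) and π(α) given by the harmonic-type mixing rules. -/
/-!
The stiffened gas law makes `ρ±e± = (p + π±)/(γ± - 1)` affine in `p`, with slope `1/(γ± - 1)`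
and intercept `π±/(γ± - 1)`. The mixing rules say exactly that `1/(γ(α) - 1)` and
`π(α)/(γ(α) - 1)` are the `α`-weighted averages of these slopes and intercepts, so the mixture
energy density is `ρe = (p + π(α))/(γ(α) - 1)`, which is the pressure law.
-/

lemma stiffenedGas_energy_density_eq {p π γ ρ e : ℝ} (hγ : γ ≠ 1)
    (h : p + π = (γ - 1) * ρ * e) : ρ * e = (p + π) / (γ - 1) := by
  rw [eq_div_iff (sub_ne_zero.mpr hγ), h]
  ring

lemma one_add_div_add_one_sub_div_pos {α a b : ℝ} (hα : α ∈ Set.Icc (-1 : ℝ) 1)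
    (ha : 0 < a) (hb : 0 < b) : 0 < (1 + α) / a + (1 - α) / b := by
  obtain ⟨hα₁, hα₂⟩ := hα
  rcases lt_or_ge α 1 with h | h
  · have : 0 < (1 - α) / b := div_pos (by linarith) hb
    have : 0 ≤ (1 + α) / a := div_nonneg (by linarith) ha.le
    linarith
  · have : 0 < (1 + α) / a := div_pos (by linarith) ha
    have : 0 ≤ (1 - α) / b := div_nonneg (by linarith) hb.le
    linarith

lemma mixture_energy_density_eq {α p γp γm πp πm γα πα : ℝ}
    (hγα : 2 / (γα - 1) = (1 + α) / (γp - 1) + (1 - α) / (γm - 1))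
    (hπα : 2 * πα / (γα - 1) = (1 + α) * πp / (γp - 1) + (1 - α) * πm / (γm - 1)) :
    (1 + α) / 2 * ((p + πp) / (γp - 1)) + (1 - α) / 2 * ((p + πm) / (γm - 1)) =
      (p + πα) / (γα - 1) :=
  calc (1 + α) / 2 * ((p + πp) / (γp - 1)) + (1 - α) / 2 * ((p + πm) / (γm - 1))
      = (p * ((1 + α) / (γp - 1) + (1 - α) / (γm - 1)) +
          ((1 + α) * πp / (γp - 1) + (1 - α) * πm / (γm - 1))) / 2 := by ring
    _ = (p * (2 / (γα - 1)) + 2 * πα / (γα - 1)) / 2 := by rw [hγα, hπα]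
    _ = (p + πα) / (γα - 1) := by ring

theorem mixture_pressure_law_general (α p γp γm πp πm ρp ρm ep em γα πα E : ℝ)
    (hα : α ∈ Set.Icc (-1 : ℝ) 1)
    (hγp : 1 < γp) (hγm : 1 < γm)
    -- stiffened gas EOS for each fluid at common (p, T)
    (hPp : p + πp = (γp - 1) * ρp * ep)
    (hPm : p + πm = (γm - 1) * ρm * em)
    -- mixing rules
    (hγα : 2 / (γα - 1) = (1 + α) / (γp - 1) + (1 - α) / (γm - 1))
    (hπα : 2 * πα / (γα - 1) = (1 + α) * πp / (γp - 1) + (1 - α) * πm / (γm - 1))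
    -- mixture density and energy density
    (hE : E = (1 + α) / 2 * ρp * ep + (1 - α) / 2 * ρm * em) :
    p = (γα - 1) * E - πα := by
  have hγα₁ : γα - 1 ≠ 0 := by
    intro h
    rw [h, div_zero] at hγα
    exact (one_add_div_add_one_sub_div_pos hα (sub_pos.mpr hγp) (sub_pos.mpr hγm)).ne hγα
  have hE' : E = (p + πα) / (γα - 1) :=
    calc E = (1 + α) / 2 * (ρp * ep) + (1 - α) / 2 * (ρm * em) := by rw [hE]; ring
      _ = (1 + α) / 2 * ((p + πp) / (γp - 1)) + (1 - α) / 2 * ((p + πm) / (γm - 1)) := by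
        rw [stiffenedGas_energy_density_eq hγp.ne' hPp,
          stiffenedGas_energy_density_eq hγm.ne' hPm]
      _ = (p + πα) / (γα - 1) := mixture_energy_density_eq hγα hπα
  rw [hE', mul_div_cancel₀ _ hγα₁]
  ring

/-- Mixture pressure law for two stiffened gases at common pressure and
temperature: `p = (γ(α)-1) ρe − π(α)`. -/
theorem mixture_pressure_law (α p T γp γm πp πm CVp CVm ρp ρm ep em γα πα ρ E : ℝ)
    (hα : α ∈ Set.Icc (-1 : ℝ) 1)
    (hγp : 1 < γp) (hγm : 1 < γm) (hCVp : 0 < CVp) (hCVm : 0 < CVm)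
    (hπp : 0 ≤ πp) (hπm : 0 ≤ πm)
    (hρp : 0 < ρp) (hρm : 0 < ρm)
    -- stiffened gas EOS for each fluid at common (p, T)
    (hPp : p + πp = (γp - 1) * ρp * ep)
    (hPm : p + πm = (γm - 1) * ρm * em)
    (hep : ep = CVp * T + πp / (γp * ρp))
    (hem : em = CVm * T + πm / (γm * ρm))
    -- mixing rules
    (hγα : 2 / (γα - 1) = (1 + α) / (γp - 1) + (1 - α) / (γm - 1))
    (hπα : 2 * πα / (γα - 1) = (1 + α) * πp / (γp - 1) + (1 - α) * πm / (γm - 1))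
    -- mixture density and energy density
    (hρ : ρ = (1 + α) / 2 * ρp + (1 - α) / 2 * ρm)
    (hE : E = (1 + α) / 2 * ρp * ep + (1 - α) / 2 * ρm * em) :
    p = (γα - 1) * E - πα :=
  mixture_pressure_law_general α p γp γm πp πm ρp ρm ep em γα πα E hα hγp hγm hPp hPm hγα hπα hE
end

section
/- For two stiffened gases at common pressure p and temperature T, the mixture temperature law holds: T = (ρe - (λ⁺(α)π⁺ + λ⁻(α)π⁻))/(ρ C_V(α)), where ρ and ρe are the volume-fraction-weighted mixture density and energy density. -/
/-!
Each fluid's EOS gives `(γ - 1) C_V ρ T = p + π / γ`, so for any reference heat capacity `C` the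
excess `ρ e - ρ C T` is an explicit combination of `π` and `p`. Weighting the two fluids by
`(1 ± α) / 2`, the coefficient of the common pressure `p` is exactly the defect of the equation
defining `C_V(α)`, hence vanishes, and what remains is `λ⁺ π⁺ + λ⁻ π⁻`.
-/

theorem StiffenedGas.mul_energy_sub_mul_temperature
    {p T γ π CV ρ e : ℝ} (C : ℝ) (hγ : γ ≠ 0) (hγ1 : γ - 1 ≠ 0) (hCV : CV ≠ 0)
    (hρ : ρ ≠ 0) (hP : p + π = (γ - 1) * ρ * e) (he : e = CV * T + π / (γ * ρ)) :
    ρ * e - ρ * C * T = (1 - C / (γ * CV)) / (γ - 1) * π + (1 - C / CV) / (γ - 1) * p := by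
  subst he
  field_simp at hP ⊢
  linear_combination (C - CV) * hP

theorem convex_weights_mul_add_pos {α x y : ℝ} (hα : α ∈ Set.Icc (-1 : ℝ) 1)
    (hx : 0 < x) (hy : 0 < y) : 0 < (1 + α) / 2 * x + (1 - α) / 2 * y :=
  convex_Ioi (0 : ℝ) hx hy (a := (1 + α) / 2) (b := (1 - α) / 2)
    (by linarith [hα.1]) (by linarith [hα.2]) (by ring)

theorem mixture_temperature_law_general
    (α p T γp γm πp πm CVp CVm ρp ρm ep em CVα lamP lamM ρ E : ℝ)
    (hα : α ∈ Set.Icc (-1 : ℝ) 1)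
    (hγp : 1 < γp) (hγm : 1 < γm) (hCVp : 0 < CVp) (hCVm : 0 < CVm)
    (hρp : 0 < ρp) (hρm : 0 < ρm)
    -- stiffened gas EOS for each fluid at common (p, T)
    (hPp : p + πp = (γp - 1) * ρp * ep)
    (hPm : p + πm = (γm - 1) * ρm * em)
    (hep : ep = CVp * T + πp / (γp * ρp))
    (hem : em = CVm * T + πm / (γm * ρm))
    -- mixture heat capacity and the coefficients λ±
    (hCVα : ((1 + α) / (CVp * (γp - 1)) + (1 - α) / (CVm * (γm - 1))) * CVα
        = (1 + α) / (γp - 1) + (1 - α) / (γm - 1))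
    (hlamP : lamP = (1 + α) / (2 * (γp - 1)) * (1 - CVα / (γp * CVp)))
    (hlamM : lamM = (1 - α) / (2 * (γm - 1)) * (1 - CVα / (γm * CVm)))
    -- mixture density and energy density
    (hρ : ρ = (1 + α) / 2 * ρp + (1 - α) / 2 * ρm)
    (hE : E = (1 + α) / 2 * ρp * ep + (1 - α) / 2 * ρm * em) :
    T = (E - (lamP * πp + lamM * πm)) / (ρ * CVα) := by
  have hγp1 : 0 < γp - 1 := by linarith
  have hγm1 : 0 < γm - 1 := by linarith
  have hρ_pos : 0 < ρ := hρ ▸ convex_weights_mul_add_pos hα hρp hρm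
  have hCVα_rhs_pos : 0 < (1 + α) / (γp - 1) + (1 - α) / (γm - 1) :=
    calc 0 < (1 + α) / 2 * (2 / (γp - 1)) + (1 - α) / 2 * (2 / (γm - 1)) :=
          convex_weights_mul_add_pos hα (by positivity) (by positivity)
      _ = (1 + α) / (γp - 1) + (1 - α) / (γm - 1) := by ring
  have hCVα_ne : CVα ≠ 0 := by
    rintro rfl
    rw [mul_zero] at hCVα
    linarith
  have hexcess_p := StiffenedGas.mul_energy_sub_mul_temperature CVα (by positivity)
    hγp1.ne' hCVp.ne' hρp.ne' hPp hep
  have hexcess_m := StiffenedGas.mul_energy_sub_mul_temperature CVα (by positivity)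
    hγm1.ne' hCVm.ne' hρm.ne' hPm hem
  have hpressure_coeff :
      (1 + α) / 2 * ((1 - CVα / CVp) / (γp - 1)) + (1 - α) / 2 * ((1 - CVα / CVm) / (γm - 1))
        = 0 := by
    field_simp at hCVα ⊢
    linear_combination -hCVα
  rw [div_mul_eq_div_div] at hlamP hlamM
  rw [eq_div_iff (mul_ne_zero hρ_pos.ne' hCVα_ne), hE, hρ, hlamP, hlamM]
  linear_combination -(1 + α) / 2 * hexcess_p - (1 - α) / 2 * hexcess_m - p * hpressure_coeff

/-- Mixture temperature law for two stiffened gases at common pressure and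
temperature: `T = (ρe − (λ⁺π⁺ + λ⁻π⁻)) / (ρ C_V(α))`. -/
theorem mixture_temperature_law
    (α p T γp γm πp πm CVp CVm ρp ρm ep em CVα lamP lamM ρ E : ℝ)
    (hα : α ∈ Set.Icc (-1 : ℝ) 1)
    (hγp : 1 < γp) (hγm : 1 < γm) (hCVp : 0 < CVp) (hCVm : 0 < CVm)
    (hπp : 0 ≤ πp) (hπm : 0 ≤ πm)
    (hρp : 0 < ρp) (hρm : 0 < ρm)
    -- stiffened gas EOS for each fluid at common (p, T)
    (hPp : p + πp = (γp - 1) * ρp * ep)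
    (hPm : p + πm = (γm - 1) * ρm * em)
    (hep : ep = CVp * T + πp / (γp * ρp))
    (hem : em = CVm * T + πm / (γm * ρm))
    -- mixture heat capacity and the coefficients λ±
    (hCVα : ((1 + α) / (CVp * (γp - 1)) + (1 - α) / (CVm * (γm - 1))) * CVα
        = (1 + α) / (γp - 1) + (1 - α) / (γm - 1))
    (hlamP : lamP = (1 + α) / (2 * (γp - 1)) * (1 - CVα / (γp * CVp)))
    (hlamM : lamM = (1 - α) / (2 * (γm - 1)) * (1 - CVα / (γm * CVm)))
    -- mixture density and energy density
    (hρ : ρ = (1 + α) / 2 * ρp + (1 - α) / 2 * ρm)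
    (hE : E = (1 + α) / 2 * ρp * ep + (1 - α) / 2 * ρm * em) :
    T = (E - (lamP * πp + lamM * πm)) / (ρ * CVα) :=
  mixture_temperature_law_general α p T γp γm πp πm CVp CVm ρp ρm ep em CVα lamP lamM ρ E hα hγp hγm
    hCVp hCVm hρp hρm hPp hPm hep hem hCVα hlamP hlamM hρ hE
end

section
/- The mixture sound speed defined by 1/(ρc_s²) = (1+α)γ⁺/(2ρ⁺(c_s⁺)²) + (1-α)γ⁻/(2ρ⁻(c_s⁻)²) − 1/(ρa²), with ρa² = ((1+α)ρ⁺(c_s⁺)²)/(2(γ⁺-1)) + ((1-α)ρ⁻(c_s⁻)²)/(2(γ⁻-1)), satisfies c_s² > 0 for all α ∈ (-1,1): i.e., the right-hand side is strictly positive. -/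
/-!
With weights `w± = (1 ± α)/2` and `x± = ρ± (c±)² / (γ± - 1)`, `ρa²` is the weighted mean
`w₊ x₊ + w₋ x₋`. Convexity of `t ↦ t⁻¹` gives `1/(ρa²) ≤ w₊/x₊ + w₋/x₋`, and
`w±/x± = w± (γ± - 1)/(ρ± (c±)²)` falls short of `w± γ±/(ρ± (c±)²)` by `w±/(ρ± (c±)²) > 0`.
-/

theorem inv_add_le_div_add_div {a b x y : ℝ} (ha : 0 ≤ a) (hb : 0 ≤ b) (hab : a + b = 1)
    (hx : 0 < x) (hy : 0 < y) : (a * x + b * y)⁻¹ ≤ a / x + b / y := by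
  simpa [div_eq_mul_inv] using (convexOn_zpow (𝕜 := ℝ) (-1)).2 hx hy ha hb hab

/-- Positivity of `1/(ρ c_s²)`: the mixture sound speed is well defined. -/
theorem mixture_sound_speed_positive (α ρp ρm cp cm γp γm ρa2 : ℝ)
    (hα : α ∈ Set.Ioo (-1 : ℝ) 1)
    (hρp : 0 < ρp) (hρm : 0 < ρm) (hcp : 0 < cp) (hcm : 0 < cm)
    (hγp : 1 < γp) (hγm : 1 < γm)
    (hρa2 : ρa2 = (1 + α) * ρp * cp ^ 2 / (2 * (γp - 1))
        + (1 - α) * ρm * cm ^ 2 / (2 * (γm - 1))) :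
    0 < (1 + α) * γp / (2 * ρp * cp ^ 2) + (1 - α) * γm / (2 * ρm * cm ^ 2)
        - 1 / ρa2 := by
  obtain ⟨hα₁, hα₂⟩ := hα
  have hwp : 0 < (1 + α) / 2 := by linarith
  have hwm : 0 < (1 - α) / 2 := by linarith
  have hγp₁ : 0 < γp - 1 := sub_pos.2 hγp
  have hγm₁ : 0 < γm - 1 := sub_pos.2 hγm
  have hmean : ρa2 = (1 + α) / 2 * (ρp * cp ^ 2 / (γp - 1))
      + (1 - α) / 2 * (ρm * cm ^ 2 / (γm - 1)) := by
    rw [hρa2]; field_simp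
  have hjensen := inv_add_le_div_add_div hwp.le hwm.le (by ring)
    (by positivity : 0 < ρp * cp ^ 2 / (γp - 1)) (by positivity : 0 < ρm * cm ^ 2 / (γm - 1))
  rw [← hmean, div_div_eq_mul_div, div_div_eq_mul_div] at hjensen
  have hgap_p : 0 < (1 + α) / 2 / (ρp * cp ^ 2) := by positivity
  have hgap_m : 0 < (1 - α) / 2 / (ρm * cm ^ 2) := by positivity
  have hsplit : (1 + α) * γp / (2 * ρp * cp ^ 2) + (1 - α) * γm / (2 * ρm * cm ^ 2)
      = ((1 + α) / 2 * (γp - 1) / (ρp * cp ^ 2) + (1 - α) / 2 * (γm - 1) / (ρm * cm ^ 2))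
        + ((1 + α) / 2 / (ρp * cp ^ 2) + (1 - α) / 2 / (ρm * cm ^ 2)) := by
    ring
  rw [hsplit, one_div]
  linarith
end

section
/- If π⁺ = 0 and π⁻ = 0 (both fluids are ideal gases at common pressure p and temperature T), then the mixture sound speed satisfies c_s² = γ(α)p/ρ and a² = c_s²/(γ(α)-1), where γ(α) is defined by 2/(γ(α)-1) = (1+α)/(γ⁺-1) + (1-α)/(γ⁻-1). -/
/-! For ideal gases `ρ± (c_s±)² = γ± p`, so the first two terms of the mixture compressibility add
up to `1 / p`, while `γ / (γ - 1) = 1 + 1 / (γ - 1)` turns the definition of `γ(α)` into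
`ρ a² = p γ(α) / (γ(α) - 1)`. Hence `1 / (ρ c_s²) = 1 / p - (γ(α) - 1) / (γ(α) p) = 1 / (γ(α) p)`,
and `a² = ρ a² / ρ = c_s² / (γ(α) - 1)`. -/

lemma one_lt_of_two_div_sub_one_pos {γ : ℝ} (h : 0 < 2 / (γ - 1)) : 1 < γ := by
  have : 0 < γ - 1 := (div_pos_iff_of_pos_left two_pos).mp h
  linarith

lemma div_sub_one_eq_one_add_one_div {γ : ℝ} (h : γ ≠ 1) : γ / (γ - 1) = 1 + 1 / (γ - 1) := by
  have : γ - 1 ≠ 0 := sub_ne_zero.mpr h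
  field_simp
  ring

lemma mixture_exponent_div_sub_one {α γp γm γα : ℝ} (hγp : γp ≠ 1) (hγm : γm ≠ 1)
    (hγα₁ : γα ≠ 1) (hγα : 2 / (γα - 1) = (1 + α) / (γp - 1) + (1 - α) / (γm - 1)) :
    (1 + α) / 2 * (γp / (γp - 1)) + (1 - α) / 2 * (γm / (γm - 1)) = γα / (γα - 1) := by
  rw [div_sub_one_eq_one_add_one_div hγp, div_sub_one_eq_one_add_one_div hγm,
    div_sub_one_eq_one_add_one_div hγα₁, show 1 / (γα - 1) = 2 / (γα - 1) / 2 by ring, hγα]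
  ring

theorem mixture_sound_speed_ideal_gas_general (α p ρp ρm γp γm cp2 cm2 γα ρ ρa2 cs2 a2 : ℝ)
    (hα : α ∈ Set.Ioo (-1 : ℝ) 1)
    (hp : 0 < p) (hρp : 0 < ρp) (hρm : 0 < ρm) (hγp : 1 < γp) (hγm : 1 < γm)
    -- ideal gas sound speeds (π± = 0)
    (hcp2 : cp2 = γp * p / ρp) (hcm2 : cm2 = γm * p / ρm)
    -- mixture adiabatic exponent
    (hγα : 2 / (γα - 1) = (1 + α) / (γp - 1) + (1 - α) / (γm - 1))
    -- mixture density, ρa² and the sound speed relation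
    (hρa2 : ρa2 = (1 + α) * ρp * cp2 / (2 * (γp - 1))
        + (1 - α) * ρm * cm2 / (2 * (γm - 1)))
    (ha2 : ρ * a2 = ρa2)
    (hcs2 : 1 / (ρ * cs2) = (1 + α) * γp / (2 * ρp * cp2)
        + (1 - α) * γm / (2 * ρm * cm2) - 1 / ρa2) :
    cs2 = γα * p / ρ ∧ a2 = cs2 / (γα - 1) := by
  obtain ⟨hα₁, hα₂⟩ := hα
  have hγp₁ : 0 < γp - 1 := by linarith
  have hγm₁ : 0 < γm - 1 := by linarith
  have hα_add : 0 < 1 + α := by linarith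
  have hα_sub : 0 < 1 - α := by linarith
  have hγα₁ : 1 < γα := one_lt_of_two_div_sub_one_pos (by rw [hγα]; positivity)
  have hρa2' : ρa2 = p * (γα / (γα - 1)) := by
    rw [← mixture_exponent_div_sub_one hγp.ne' hγm.ne' hγα₁.ne' hγα, hρa2, hcp2, hcm2]
    field_simp
  have hρcs2 : ρ * cs2 = γα * p := by
    rw [← inv_inj, ← one_div, ← one_div, hcs2, hρa2', hcp2, hcm2]
    field_simp
    ring
  have hρ : ρ ≠ 0 := left_ne_zero_of_mul (a := ρ) (b := cs2) (by rw [hρcs2]; positivity)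
  have ha2' : a2 = ρa2 / ρ := eq_div_of_mul_eq hρ (by rw [mul_comm, ha2])
  have hcs2' : cs2 = γα * p / ρ := eq_div_of_mul_eq hρ (by rw [mul_comm, hρcs2])
  refine ⟨hcs2', ?_⟩
  rw [ha2', hρa2', hcs2']
  ring

/-- Ideal gas case (`π⁺ = π⁻ = 0`): the mixture sound speed satisfies
`c_s² = γ(α) p / ρ` and `a² = c_s²/(γ(α)-1)`. -/
theorem mixture_sound_speed_ideal_gas (α p ρp ρm γp γm cp2 cm2 γα ρ ρa2 cs2 a2 : ℝ)
    (hα : α ∈ Set.Ioo (-1 : ℝ) 1)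
    (hp : 0 < p) (hρp : 0 < ρp) (hρm : 0 < ρm) (hγp : 1 < γp) (hγm : 1 < γm)
    -- ideal gas sound speeds (π± = 0)
    (hcp2 : cp2 = γp * p / ρp) (hcm2 : cm2 = γm * p / ρm)
    -- mixture adiabatic exponent
    (hγα : 2 / (γα - 1) = (1 + α) / (γp - 1) + (1 - α) / (γm - 1))
    -- mixture density, ρa² and the sound speed relation
    (hρ : ρ = (1 + α) / 2 * ρp + (1 - α) / 2 * ρm)
    (hρa2 : ρa2 = (1 + α) * ρp * cp2 / (2 * (γp - 1))
        + (1 - α) * ρm * cm2 / (2 * (γm - 1)))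
    (ha2 : ρ * a2 = ρa2)
    (hcs2pos : 0 < cs2)
    (hcs2 : 1 / (ρ * cs2) = (1 + α) * γp / (2 * ρp * cp2)
        + (1 - α) * γm / (2 * ρm * cm2) - 1 / ρa2) :
    cs2 = γα * p / ρ ∧ a2 = cs2 / (γα - 1) :=
  mixture_sound_speed_ideal_gas_general α p ρp ρm γp γm cp2 cm2 γα ρ ρa2 cs2 a2 hα hp hρp hρm hγp
    hγm hcp2 hcm2 hγα hρa2 ha2 hcs2
end
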